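/- arXiv:1807.00503 — 3 statements merged into one kernel-verified Lean document; each statement's English description precedes it below -/
import Mathlib

section
/- For z = α + iβ with -1 ≤ α ≤ 1 and β > 0, the function F(0, z) = ∫_{-1}^{1} dx / (x^2 - z^2) satisfies F(0,z) = (1/(2z)) · (log((z-1)/(z+1)) - log((z+1)/(z-1))), and in particular z · F(0, z) → iπ as z → 0 along such values. -/
open MeasureTheory Filter

/-- `F(0, z) = ∫₋₁¹ dx / (x² - z²)`. -/
noncomputable def F0 (z : ℂ) : ℂ := ∫ x in (-1 : ℝ)..1, ((x : ℂ) ^ 2 - z ^ 2)⁻¹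

/-!
On the upper half plane `x ↦ (2z)⁻¹ (log (z - x) - log (z + x))` is a primitive of
`(x² - z²)⁻¹` along the real axis: both `z - x` and `z + x` stay in the upper half plane, where
the principal logarithm is holomorphic. Hence `z F(0, z) = log (z - 1) - log (z + 1)`, and as
`z → 0` from above, `log (z - 1)` tends to the boundary value `log (-1) = iπ` while
`log (z + 1) → 0`.
-/

namespace Complex

lemma ne_zero_of_im_pos {z : ℂ} (hz : 0 < z.im) : z ≠ 0 := by
  rintro rfl
  simp at hz

lemma mem_slitPlane_of_im_pos {z : ℂ} (hz : 0 < z.im) : z ∈ slitPlane :=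
  Or.inr hz.ne'

-- Both arguments lie in `(0, π)`, so `log a - log b` has imaginary part in `(-π, π)`, where
-- `log` inverts `exp`.
lemma log_div_of_im_pos {a b : ℂ} (ha : 0 < a.im) (hb : 0 < b.im) :
    log (a / b) = log a - log b := by
  have harg_a : 0 ≤ arg a := arg_nonneg_iff.2 ha.le
  have harg_b : 0 ≤ arg b := arg_nonneg_iff.2 hb.le
  have hle_a : arg a ≤ Real.pi := arg_le_pi a
  have hlt_b : arg b < Real.pi := arg_lt_pi_iff.2 (Or.inr hb.ne')
  rw [← log_exp (x := log a - log b), exp_sub, exp_log (ne_zero_of_im_pos ha),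
    exp_log (ne_zero_of_im_pos hb)] <;>
  · simp only [sub_im, log_im]
    linarith

lemma ofReal_sq_sub_sq_ne_zero {z : ℂ} (hz : 0 < z.im) (x : ℝ) : (x : ℂ) ^ 2 - z ^ 2 ≠ 0 := by
  rw [sq_sub_sq, mul_ne_zero_iff]
  constructor
  · exact ne_zero_of_im_pos (by simp [hz])
  · exact sub_ne_zero.2 fun h => by simp [← h] at hz

lemma hasDerivAt_log_sub_log {z : ℂ} (hz : 0 < z.im) (x : ℝ) :
    HasDerivAt (fun t : ℝ => (2 * z)⁻¹ * (log (z - t) - log (z + t)))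
      (((x : ℂ) ^ 2 - z ^ 2)⁻¹) x := by
  have hsub : z - x ∈ slitPlane := mem_slitPlane_of_im_pos (by simpa using hz)
  have hadd : z + x ∈ slitPlane := mem_slitPlane_of_im_pos (by simpa using hz)
  have hderiv : HasDerivAt (fun w : ℂ => (2 * z)⁻¹ * (log (z - w) - log (z + w)))
      ((2 * z)⁻¹ * (-(z - x)⁻¹ - (z + x)⁻¹)) x := by
    have hlog_sub := (hasDerivAt_log hsub).comp (x : ℂ) ((hasDerivAt_id (x : ℂ)).const_sub z)
    have hlog_add := (hasDerivAt_log hadd).comp (x : ℂ) ((hasDerivAt_id (x : ℂ)).const_add z)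
    simpa [Function.comp_def, neg_div] using (hlog_sub.sub hlog_add).const_mul (2 * z)⁻¹
  convert hderiv.comp_ofReal using 1
  have hz0 := ne_zero_of_im_pos hz
  have hsub0 : z - x ≠ 0 := slitPlane_ne_zero hsub
  have hadd0 : z + x ≠ 0 := slitPlane_ne_zero hadd
  have hsq := ofReal_sq_sub_sq_ne_zero hz x
  field_simp
  ring

end Complex

open Complex

lemma mul_F0_of_im_pos {z : ℂ} (hz : 0 < z.im) : z * F0 z = log (z - 1) - log (z + 1) := by
  have hint : IntervalIntegrable (fun x : ℝ => ((x : ℂ) ^ 2 - z ^ 2)⁻¹) volume (-1) 1 :=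
    (((continuous_ofReal.pow 2).sub continuous_const).inv₀
      (ofReal_sq_sub_sq_ne_zero hz)).intervalIntegrable _ _
  rw [F0, intervalIntegral.integral_eq_sub_of_hasDerivAt
    (fun x _ => hasDerivAt_log_sub_log hz x) hint]
  have hz0 := ne_zero_of_im_pos hz
  push_cast
  rw [sub_neg_eq_add, ← sub_eq_add_neg]
  field_simp
  ring

lemma F0_eq_of_im_pos {z : ℂ} (hz : 0 < z.im) :
    F0 z = 1 / (2 * z) * (log ((z - 1) / (z + 1)) - log ((z + 1) / (z - 1))) := by
  have him_sub : 0 < (z - 1).im := by simpa using hz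
  have him_add : 0 < (z + 1).im := by simpa using hz
  have hz0 := ne_zero_of_im_pos hz
  rw [log_div_of_im_pos him_sub him_add, log_div_of_im_pos him_add him_sub,
    ← mul_right_inj' hz0, mul_F0_of_im_pos hz]
  field_simp
  ring

lemma tendsto_mul_F0_nhdsWithin_im_pos :
    Tendsto (fun z : ℂ => z * F0 z) (nhdsWithin 0 {z : ℂ | 0 < z.im})
      (nhds ((Real.pi : ℂ) * I)) := by
  set H := nhdsWithin (0 : ℂ) {z : ℂ | 0 < z.im}
  have hsub : Tendsto (fun z : ℂ => z - 1) H (nhdsWithin (-1) {w : ℂ | 0 ≤ w.im}) := by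
    refine tendsto_nhdsWithin_iff.2 ⟨?_, ?_⟩
    · exact ((continuous_sub_right 1).tendsto' 0 (-1) (by norm_num)).mono_left
        nhdsWithin_le_nhds
    · filter_upwards [self_mem_nhdsWithin] with z hz
      simpa using le_of_lt hz
  have hlog_sub : Tendsto (fun z : ℂ => log (z - 1)) H (nhds ((Real.pi : ℂ) * I)) := by
    simpa [Function.comp_def] using (tendsto_log_nhdsWithin_im_nonneg_of_re_neg_of_im_zero
      (z := -1) (by norm_num) (by norm_num)).comp hsub
  have hlog_add : Tendsto (fun z : ℂ => log (z + 1)) H (nhds 0) := by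
    have hcont : ContinuousAt (fun z : ℂ => log (z + 1)) 0 :=
      (continuousAt_clog (by simp)).comp (continuous_add_const 1).continuousAt
    simpa using hcont.tendsto.mono_left nhdsWithin_le_nhds
  have heq : (fun z : ℂ => log (z - 1) - log (z + 1)) =ᶠ[H] fun z => z * F0 z := by
    filter_upwards [self_mem_nhdsWithin] with z hz
    exact (mul_F0_of_im_pos hz).symm
  simpa using (hlog_sub.sub hlog_add).congr' heq

/-- For `z = α + iβ` with `-1 ≤ α ≤ 1`, `β > 0`, we have
`F(0,z) = (1/(2z)) (log((z-1)/(z+1)) - log((z+1)/(z-1)))`; and `z·F(0,z) → iπ`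
as `z → 0` through such values. -/
theorem stmt_1 :
    (∀ z : ℂ, -1 ≤ z.re → z.re ≤ 1 → 0 < z.im →
      F0 z = 1 / (2 * z) *
        (Complex.log ((z - 1) / (z + 1)) - Complex.log ((z + 1) / (z - 1)))) ∧
    Tendsto (fun z : ℂ => z * F0 z)
      (nhdsWithin 0 {z : ℂ | -1 ≤ z.re ∧ z.re ≤ 1 ∧ 0 < z.im})
      (nhds ((Real.pi : ℂ) * Complex.I)) :=
  ⟨fun _ _ _ hz => F0_eq_of_im_pos hz,
    tendsto_mul_F0_nhdsWithin_im_pos.mono_left (nhdsWithin_mono _ fun _ hz => hz.2.2)⟩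
end

section
/- Let m₁, m₂ > 0 and Γ₁, Γ₂ > 0, set Γ± = Γ₁m₁ ± Γ₂m₂ and Δ₂(s) = λ(s, m₁², m₂²) - Γ₋² + 2i[Γ₊ s - Γ₋ (m₁² - m₂²)]. Then Im Δ₂(s) = 0 iff s = s* := (Γ₋/Γ₊)(m₁² - m₂²), and at s = s* one additionally has Re Δ₂(s*) = 0 if and only if 4 m₁² m₂² (m₁² - m₂²)(Γ₂² - Γ₁²) = (m₁² Γ₁² - m₂² Γ₂²)². -/
/- With `Γ₊ ≠ 0` the imaginary part `2(Γ₊ s - Γ₋(m₁² - m₂²))` is affine in `s` with a single zero `s*`.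
Since `Γ₊Γ₋ = m₁²Γ₁² - m₂²Γ₂²`, clearing the denominator `Γ₊²` in `λ(s*, m₁², m₂²) - Γ₋²` is a polynomial
identity that leaves exactly `4m₁²m₂²(m₁² - m₂²)(Γ₂² - Γ₁²) - (m₁²Γ₁² - m₂²Γ₂²)²`. -/

/-- The Källén function. -/
def kallen (a b c : ℝ) : ℝ := a ^ 2 + b ^ 2 + c ^ 2 - 2 * a * b - 2 * b * c - 2 * c * a

/-- The complex-mass BST factor of the bubble,
`Δ₂(s) = λ(s, m₁², m₂²) - Γ₋² + 2i[Γ₊ s - Γ₋(m₁² - m₂²)]`. -/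
noncomputable def Delta2 (m₁ m₂ Γ₁ Γ₂ s : ℝ) : ℂ :=
  ((kallen s (m₁ ^ 2) (m₂ ^ 2) - (Γ₁ * m₁ - Γ₂ * m₂) ^ 2 : ℝ) : ℂ) +
    2 * Complex.I *
      (((Γ₁ * m₁ + Γ₂ * m₂) * s - (Γ₁ * m₁ - Γ₂ * m₂) * (m₁ ^ 2 - m₂ ^ 2) : ℝ) : ℂ)

section

variable (m₁ m₂ Γ₁ Γ₂ : ℝ)

theorem Delta2_re (s : ℝ) :
    (Delta2 m₁ m₂ Γ₁ Γ₂ s).re = kallen s (m₁ ^ 2) (m₂ ^ 2) - (Γ₁ * m₁ - Γ₂ * m₂) ^ 2 := by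
  simp only [Delta2, Complex.add_re, Complex.mul_re, Complex.mul_im,
    Complex.ofReal_re, Complex.ofReal_im, Complex.I_re, Complex.I_im, Complex.re_ofNat,
    Complex.im_ofNat]
  ring

theorem Delta2_im (s : ℝ) :
    (Delta2 m₁ m₂ Γ₁ Γ₂ s).im =
      2 * ((Γ₁ * m₁ + Γ₂ * m₂) * s - (Γ₁ * m₁ - Γ₂ * m₂) * (m₁ ^ 2 - m₂ ^ 2)) := by
  simp only [Delta2, Complex.add_im, Complex.mul_re, Complex.mul_im,
    Complex.ofReal_re, Complex.ofReal_im, Complex.I_re, Complex.I_im, Complex.re_ofNat,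
    Complex.im_ofNat]
  ring

variable {m₁ m₂ Γ₁ Γ₂}

theorem Delta2_im_eq_zero_iff (hΓ : Γ₁ * m₁ + Γ₂ * m₂ ≠ 0) (s : ℝ) :
    (Delta2 m₁ m₂ Γ₁ Γ₂ s).im = 0 ↔
      s = (Γ₁ * m₁ - Γ₂ * m₂) / (Γ₁ * m₁ + Γ₂ * m₂) * (m₁ ^ 2 - m₂ ^ 2) := by
  rw [Delta2_im, div_mul_eq_mul_div, eq_div_iff hΓ]
  constructor <;> intro h <;> linarith

theorem Delta2_re_at_im_zero (hΓ : Γ₁ * m₁ + Γ₂ * m₂ ≠ 0) :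
    (Delta2 m₁ m₂ Γ₁ Γ₂
        ((Γ₁ * m₁ - Γ₂ * m₂) / (Γ₁ * m₁ + Γ₂ * m₂) * (m₁ ^ 2 - m₂ ^ 2))).re =
      (4 * m₁ ^ 2 * m₂ ^ 2 * (m₁ ^ 2 - m₂ ^ 2) * (Γ₂ ^ 2 - Γ₁ ^ 2) -
        (m₁ ^ 2 * Γ₁ ^ 2 - m₂ ^ 2 * Γ₂ ^ 2) ^ 2) / (Γ₁ * m₁ + Γ₂ * m₂) ^ 2 := by
  rw [Delta2_re, eq_div_iff (pow_ne_zero 2 hΓ), kallen]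
  field_simp
  ring

end

/-- Peierls zeros of the two-point function: `Im Δ₂(s) = 0` iff
`s = s* = (Γ₋/Γ₊)(m₁² - m₂²)`, and `Re Δ₂(s*) = 0` iff
`4 m₁² m₂² (m₁² - m₂²)(Γ₂² - Γ₁²) = (m₁²Γ₁² - m₂²Γ₂²)²`. -/
theorem stmt_7 (m₁ m₂ Γ₁ Γ₂ : ℝ) (hm₁ : 0 < m₁) (hm₂ : 0 < m₂)
    (hΓ₁ : 0 < Γ₁) (hΓ₂ : 0 < Γ₂) :
    (∀ s : ℝ, (Delta2 m₁ m₂ Γ₁ Γ₂ s).im = 0 ↔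
      s = (Γ₁ * m₁ - Γ₂ * m₂) / (Γ₁ * m₁ + Γ₂ * m₂) * (m₁ ^ 2 - m₂ ^ 2)) ∧
    ((Delta2 m₁ m₂ Γ₁ Γ₂
        ((Γ₁ * m₁ - Γ₂ * m₂) / (Γ₁ * m₁ + Γ₂ * m₂) * (m₁ ^ 2 - m₂ ^ 2))).re = 0 ↔
      4 * m₁ ^ 2 * m₂ ^ 2 * (m₁ ^ 2 - m₂ ^ 2) * (Γ₂ ^ 2 - Γ₁ ^ 2) =
        (m₁ ^ 2 * Γ₁ ^ 2 - m₂ ^ 2 * Γ₂ ^ 2) ^ 2) := by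
  have hΓ : Γ₁ * m₁ + Γ₂ * m₂ ≠ 0 := by positivity
  refine ⟨Delta2_im_eq_zero_iff hΓ, ?_⟩
  rw [Delta2_re_at_im_zero hΓ, div_eq_zero_iff, sub_eq_zero]
  exact or_iff_left (pow_ne_zero 2 hΓ)
end

section
/- Let V(x₁,x₂,x₃) be the quadratic form of a one-loop box with BST factor Δ₄ ≠ 0 and center X. Then the four-dimensional box integral satisfies D₀(dim=4) = -(1/(2Δ₄))[D₀(dim=6) - T], where D₀(dim=d) = ∫_{simplex} V^{d/2-4} and T = Σ_{i=0}^{3} (X_i - X_{i+1}) ∫_{2-simplex} V^{-1}(contraction i,i+1), with X₀ = 1, X₄ = 0. -/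
open Matrix MeasureTheory

/-- The quadratic form of a one-loop box in completed-square form:
`V(x) = (x-X)ᵗ H (x-X) + Δ₄`. -/
noncomputable def boxV (H : Matrix (Fin 3) (Fin 3) ℝ) (X : Fin 3 → ℝ) (Δ : ℝ)
    (x₁ x₂ x₃ : ℝ) : ℝ :=
  (![x₁, x₂, x₃] - X) ⬝ᵥ (H *ᵥ (![x₁, x₂, x₃] - X)) + Δ

/-!
Euler's identity for the quadratic form, `(x - X) ⬝ ∇V = 2 (V - Δ)`, shows that the vector field
`F = (x - X) / V` has divergence `3 / V - (x - X) ⬝ ∇V / V² = 1 / V + 2 Δ / V²`. Integrating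
`div F` over the simplex `0 ≤ x₃ ≤ x₂ ≤ x₁ ≤ 1`, coordinate by coordinate with Fubini and the
fundamental theorem of calculus, leaves the fluxes of `F` through the four faces `x₁ = 1`,
`x₁ = x₂`, `x₂ = x₃` and `x₃ = 0`; their sum is the contraction term `T`.
-/

open Set Function intervalIntegral

def triangle (a c : ℝ) : Set (ℝ × ℝ) := {p | a ≤ p.2 ∧ p.2 ≤ p.1 ∧ p.1 ≤ c}

theorem isCompact_triangle (a c : ℝ) : IsCompact (triangle a c) :=
  isCompact_Icc.of_isClosed_subset
    ((isClosed_le continuous_const continuous_snd).inter ((isClosed_le continuous_snd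
      continuous_fst).inter (isClosed_le continuous_fst continuous_const)))
    (fun p ⟨h₁, h₂, h₃⟩ => (⟨⟨h₁.trans h₂, h₁⟩, ⟨h₃, h₂.trans h₃⟩⟩ : (a, a) ≤ p ∧ p ≤ (c, c)))

theorem intervalIntegral_swap_triangle {E : Type*} [NormedAddCommGroup E] [NormedSpace ℝ E]
    [CompleteSpace E] {g : ℝ × ℝ → E} {a c : ℝ} (hac : a ≤ c)
    (hg : IntegrableOn g (triangle a c)) :
    ∫ x in a..c, ∫ y in a..x, g (x, y) = ∫ y in a..c, ∫ x in y..c, g (x, y) := by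
  -- both sides are the integral over the square `[a, c]²` of `g` cut off to `{y < x}`
  set G : ℝ → ℝ → E := fun x y => {p : ℝ × ℝ | p.2 < p.1}.indicator g (x, y)
  have hGx : ∀ x, G x = (Iio x).indicator fun y => g (x, y) := fun x => by
    ext y; simp [G, indicator_apply]
  have hGy : ∀ y, (G · y) = (Ioi y).indicator fun x => g (x, y) := fun y => by
    ext x; simp [G, indicator_apply]
  have hint : IntegrableOn (uncurry G) (uIoc a c ×ˢ uIoc a c) := by
    rw [show uncurry G = {p : ℝ × ℝ | p.2 < p.1}.indicator g from rfl,
      integrableOn_indicator_iff (measurableSet_lt measurable_snd measurable_fst)]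
    refine hg.mono_set fun p ⟨hp, hpx, hpy⟩ => ?_
    rw [uIoc_of_le hac] at hpx hpy
    exact ⟨hpy.1.le, hp.le, hpx.2⟩
  calc ∫ x in a..c, ∫ y in a..x, g (x, y) = ∫ x in a..c, ∫ y in a..c, G x y := by
        refine integral_congr fun x hx => ?_
        rw [uIcc_of_le hac] at hx
        rw [hGx, integral_of_le hac, setIntegral_indicator measurableSet_Iio,
          show Ioc a c ∩ Iio x = Ioo a x from ext fun y => ⟨fun h => ⟨h.1.1, h.2⟩,
            fun h => ⟨⟨h.1, h.2.le.trans hx.2⟩, h.2⟩⟩,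
          ← integral_Ioc_eq_integral_Ioo, integral_of_le hx.1]
    _ = ∫ y in a..c, ∫ x in a..c, G x y := intervalIntegral_intervalIntegral_swap hint
    _ = ∫ y in a..c, ∫ x in y..c, g (x, y) := by
        refine integral_congr fun y hy => ?_
        rw [uIcc_of_le hac] at hy
        rw [hGy, integral_of_le hac, setIntegral_indicator measurableSet_Ioi,
          Ioc_inter_Ioi, max_eq_right hy.1, integral_of_le hy.2]

theorem ContinuousOn.intervalIntegral_parametric {X : Type*} [MetricSpace X] {f : X × ℝ → ℝ}
    {s : Set X} {a : ℝ} {b : X → ℝ} (hs : IsClosed s) (hb : Continuous b)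
    (hf : ContinuousOn f {q | q.1 ∈ s ∧ q.2 ∈ uIcc a (b q.1)}) :
    ContinuousOn (fun x => ∫ t in a..b x, f (x, t)) s := by
  set S : Set (X × ℝ) := {q | q.1 ∈ s ∧ q.2 ∈ uIcc a (b q.1)}
  have hS : IsClosed S := (hs.preimage continuous_fst).inter
    ((isClosed_le (by fun_prop) continuous_snd).inter (isClosed_le continuous_snd (by fun_prop)))
  -- Tietze: extend `f` from the closed set `S` to a continuous function on `X × ℝ`
  obtain ⟨F, hF⟩ := ContinuousMap.exists_restrict_eq hS ⟨S.domRestrict f, hf.domRestrict⟩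
  have hFf : ∀ q ∈ S, F q = f q := fun q hq => congrArg (· ⟨q, hq⟩) hF
  refine (continuous_parametric_intervalIntegral_of_continuous (μ := volume) (a₀ := a)
    (f := fun x t => F (x, t)) F.continuous hb).continuousOn.congr fun x hx => ?_
  exact integral_congr fun t ht => (hFf (x, t) ⟨hx, ht⟩).symm

def simplex : Set (ℝ × ℝ × ℝ) := {p | 0 ≤ p.2.2 ∧ p.2.2 ≤ p.2.1 ∧ p.2.1 ≤ p.1 ∧ p.1 ≤ 1}

noncomputable def triangleIntegral (g : ℝ × ℝ → ℝ) : ℝ :=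
  ∫ x in (0:ℝ)..1, ∫ y in (0:ℝ)..x, g (x, y)

noncomputable def simplexIntegral (f : ℝ × ℝ × ℝ → ℝ) : ℝ :=
  ∫ x in (0:ℝ)..1, ∫ y in (0:ℝ)..x, ∫ z in (0:ℝ)..y, f (x, y, z)

section TriangleIntegral

variable {f g : ℝ × ℝ → ℝ}

theorem triangleIntegral_const_mul (c : ℝ) (g : ℝ × ℝ → ℝ) :
    triangleIntegral (fun q => c * g q) = c * triangleIntegral g := by
  simp only [triangleIntegral, intervalIntegral.integral_const_mul]

theorem triangleIntegral_congr (h : EqOn f g (triangle 0 1)) :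
    triangleIntegral f = triangleIntegral g := by
  refine integral_congr fun x hx => integral_congr fun y hy => h ?_
  rw [uIcc_of_le zero_le_one] at hx
  rw [uIcc_of_le hx.1] at hy
  exact ⟨hy.1, hy.2, hx.2⟩

theorem triangleIntegral_add (hf : ContinuousOn f (triangle 0 1))
    (hg : ContinuousOn g (triangle 0 1)) :
    triangleIntegral (fun q => f q + g q) = triangleIntegral f + triangleIntegral g := by
  have hsub : {q : ℝ × ℝ | q.1 ∈ Icc 0 1 ∧ q.2 ∈ uIcc 0 q.1} ⊆ triangle 0 1 :=
    fun q ⟨h₁, h₂⟩ => by rw [uIcc_of_le h₁.1] at h₂; exact ⟨h₂.1, h₂.2, h₁.2⟩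
  have houter : ∀ {h : ℝ × ℝ → ℝ}, ContinuousOn h (triangle 0 1) →
      IntervalIntegrable (fun x => ∫ y in (0:ℝ)..x, h (x, y)) volume 0 1 := fun hh =>
    ((hh.mono hsub).intervalIntegral_parametric isClosed_Icc
      continuous_id).intervalIntegrable_of_Icc zero_le_one
  have hinner : ∀ {h : ℝ × ℝ → ℝ}, ContinuousOn h (triangle 0 1) → ∀ x ∈ Icc (0:ℝ) 1,
      IntervalIntegrable (fun y => h (x, y)) volume 0 x := fun hh x hx =>
    (hh.comp (Continuous.prodMk_right x).continuousOn fun y hy => hsub ⟨hx, hy⟩).intervalIntegrable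
  unfold triangleIntegral
  rw [← integral_add (houter hf) (houter hg)]
  refine integral_congr fun x hx => ?_
  rw [uIcc_of_le zero_le_one] at hx
  exact integral_add (hinner hf x hx) (hinner hg x hx)

end TriangleIntegral

section SimplexIntegral

variable {f g F : ℝ × ℝ × ℝ → ℝ}

theorem simplexIntegral_eq_triangleIntegral (f : ℝ × ℝ × ℝ → ℝ) :
    simplexIntegral f = triangleIntegral fun q => ∫ z in (0:ℝ)..q.2, f (q.1, q.2, z) :=
  rfl

theorem continuousOn_simplex_fiberIntegral (hf : ContinuousOn f simplex) :
    ContinuousOn (fun q : ℝ × ℝ => ∫ z in (0:ℝ)..q.2, f (q.1, q.2, z)) (triangle 0 1) := by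
  refine ContinuousOn.intervalIntegral_parametric
    (f := fun r : (ℝ × ℝ) × ℝ => f (r.1.1, r.1.2, r.2)) (isCompact_triangle 0 1).isClosed
    continuous_snd
    (hf.comp (by fun_prop) fun r ⟨⟨h₁, h₂, h₃⟩, hr⟩ => ?_)
  rw [uIcc_of_le h₁] at hr
  exact ⟨hr.1, hr.2, h₂, h₃⟩

theorem simplexIntegral_const_mul (c : ℝ) (f : ℝ × ℝ × ℝ → ℝ) :
    simplexIntegral (fun p => c * f p) = c * simplexIntegral f := by
  simp only [simplexIntegral, intervalIntegral.integral_const_mul]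

theorem simplexIntegral_congr (h : EqOn f g simplex) : simplexIntegral f = simplexIntegral g := by
  refine integral_congr fun x hx => integral_congr fun y hy => integral_congr fun z hz => h ?_
  rw [uIcc_of_le zero_le_one] at hx
  rw [uIcc_of_le hx.1] at hy
  rw [uIcc_of_le hy.1] at hz
  exact ⟨hz.1, hz.2, hy.2, hx.2⟩

theorem simplexIntegral_add (hf : ContinuousOn f simplex) (hg : ContinuousOn g simplex) :
    simplexIntegral (fun p => f p + g p) = simplexIntegral f + simplexIntegral g := by
  have hseg : ∀ {h : ℝ × ℝ × ℝ → ℝ}, ContinuousOn h simplex → ∀ q ∈ triangle 0 1,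
      IntervalIntegrable (fun z => h (q.1, q.2, z)) volume 0 q.2 := fun hh q ⟨h₁, h₂, h₃⟩ => by
    refine (hh.comp (by fun_prop) fun z hz => ?_).intervalIntegrable
    rw [uIcc_of_le h₁] at hz
    exact ⟨hz.1, hz.2, h₂, h₃⟩
  simp only [simplexIntegral_eq_triangleIntegral]
  rw [← triangleIntegral_add (continuousOn_simplex_fiberIntegral hf)
    (continuousOn_simplex_fiberIntegral hg)]
  exact triangleIntegral_congr fun q hq => integral_add (hseg hf q hq) (hseg hg q hq)

theorem simplexIntegral_eq_of_hasDerivAt_fst (hg : ContinuousOn g simplex)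
    (hF : ∀ p ∈ simplex, HasDerivAt (fun t => F (t, p.2)) (g p) p.1) :
    simplexIntegral g = triangleIntegral fun q => F (1, q.1, q.2) - F (q.1, q.1, q.2) := by
  refine (intervalIntegral_swap_triangle zero_le_one
    ((continuousOn_simplex_fiberIntegral hg).integrableOn_compact (isCompact_triangle 0 1))).trans
    (integral_congr fun y hy => ?_)
  rw [uIcc_of_le zero_le_one] at hy
  have hrect : MapsTo (fun r : ℝ × ℝ => (r.1, y, r.2)) (uIcc y 1 ×ˢ uIcc 0 y) simplex :=
    fun r ⟨hx, hz⟩ => by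
      rw [uIcc_of_le hy.2] at hx
      rw [uIcc_of_le hy.1] at hz
      exact ⟨hz.1, hz.2, hx.1, hx.2⟩
  have hint : IntegrableOn (uncurry fun x z => g (x, y, z)) (uIoc y 1 ×ˢ uIoc 0 y) :=
    ((hg.comp (by fun_prop) hrect).integrableOn_compact
      (isCompact_uIcc.prod isCompact_uIcc)).mono_set (prod_mono uIoc_subset_uIcc uIoc_subset_uIcc)
  refine (intervalIntegral_intervalIntegral_swap hint).trans
    (integral_congr fun z hz => integral_eq_sub_of_hasDerivAt (f := fun x => F (x, y, z))
      (fun x hx => ?_) ?_)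
  · exact hF (x, y, z) (hrect (mk_mem_prod hx hz))
  · exact (hg.comp (by fun_prop) fun x hx => hrect (mk_mem_prod hx hz)).intervalIntegrable

theorem simplexIntegral_eq_of_hasDerivAt_snd (hg : ContinuousOn g simplex)
    (hF : ∀ p ∈ simplex, HasDerivAt (fun t => F (p.1, t, p.2.2)) (g p) p.2.1) :
    simplexIntegral g = triangleIntegral fun q => F (q.1, q.1, q.2) - F (q.1, q.2, q.2) := by
  refine integral_congr fun x hx => ?_
  rw [uIcc_of_le zero_le_one] at hx
  have hslice : MapsTo (fun r : ℝ × ℝ => (x, r)) (triangle 0 x) simplex :=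
    fun r ⟨h₁, h₂, h₃⟩ => ⟨h₁, h₂, h₃, hx.2⟩
  refine (intervalIntegral_swap_triangle (g := fun r => g (x, r)) hx.1
    ((hg.comp (by fun_prop) hslice).integrableOn_compact (isCompact_triangle 0 x))).trans
    (integral_congr fun z hz => ?_)
  rw [uIcc_of_le hx.1] at hz
  have hseg : MapsTo (fun y => (x, y, z)) (uIcc z x) simplex := fun y hy => by
    rw [uIcc_of_le hz.2] at hy
    exact hslice ⟨hz.1, hy.1, hy.2⟩
  exact integral_eq_sub_of_hasDerivAt (f := fun y => F (x, y, z))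
    (fun y hy => hF (x, y, z) (hseg hy))
    (hg.comp (by fun_prop) hseg).intervalIntegrable

theorem simplexIntegral_eq_of_hasDerivAt_thd (hg : ContinuousOn g simplex)
    (hF : ∀ p ∈ simplex, HasDerivAt (fun t => F (p.1, p.2.1, t)) (g p) p.2.2) :
    simplexIntegral g = triangleIntegral fun q => F (q.1, q.2, q.2) - F (q.1, q.2, 0) := by
  refine integral_congr fun x hx => integral_congr fun y hy => ?_
  rw [uIcc_of_le zero_le_one] at hx
  rw [uIcc_of_le hx.1] at hy
  have hseg : MapsTo (fun z => (x, y, z)) (uIcc 0 y) simplex := fun z hz => by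
    rw [uIcc_of_le hy.1] at hz
    exact ⟨hz.1, hz.2, hy.2, hx.2⟩
  exact integral_eq_sub_of_hasDerivAt (f := fun z => F (x, y, z))
    (fun z hz => hF (x, y, z) (hseg hz))
    (hg.comp (by fun_prop) hseg).intervalIntegrable

end SimplexIntegral

theorem mapsTo_simplex_face_one :
    MapsTo (fun q : ℝ × ℝ => (1, q.1, q.2)) (triangle 0 1) simplex :=
  fun _ ⟨h₁, h₂, h₃⟩ => ⟨h₁, h₂, h₃, le_rfl⟩

theorem mapsTo_simplex_face_fst_eq_snd :
    MapsTo (fun q : ℝ × ℝ => (q.1, q.1, q.2)) (triangle 0 1) simplex :=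
  fun _ ⟨h₁, h₂, h₃⟩ => ⟨h₁, h₂, le_rfl, h₃⟩

theorem mapsTo_simplex_face_snd_eq_thd :
    MapsTo (fun q : ℝ × ℝ => (q.1, q.2, q.2)) (triangle 0 1) simplex :=
  fun _ ⟨h₁, h₂, h₃⟩ => ⟨h₁, le_rfl, h₂, h₃⟩

theorem mapsTo_simplex_face_zero : MapsTo (fun q : ℝ × ℝ => (q.1, q.2, 0)) (triangle 0 1) simplex :=
  fun _ ⟨h₁, h₂, h₃⟩ => ⟨le_rfl, h₁, h₂, h₃⟩

theorem simplexIntegral_divergence {F₁ F₂ F₃ g₁ g₂ g₃ : ℝ × ℝ × ℝ → ℝ}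
    (hF₁ : ContinuousOn F₁ simplex) (hF₂ : ContinuousOn F₂ simplex)
    (hF₃ : ContinuousOn F₃ simplex) (hg₁ : ContinuousOn g₁ simplex)
    (hg₂ : ContinuousOn g₂ simplex) (hg₃ : ContinuousOn g₃ simplex)
    (hd₁ : ∀ p ∈ simplex, HasDerivAt (fun t => F₁ (t, p.2)) (g₁ p) p.1)
    (hd₂ : ∀ p ∈ simplex, HasDerivAt (fun t => F₂ (p.1, t, p.2.2)) (g₂ p) p.2.1)
    (hd₃ : ∀ p ∈ simplex, HasDerivAt (fun t => F₃ (p.1, p.2.1, t)) (g₃ p) p.2.2) :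
    simplexIntegral (fun p => g₁ p + g₂ p + g₃ p) = triangleIntegral fun q =>
      F₁ (1, q.1, q.2) + (F₂ (q.1, q.1, q.2) - F₁ (q.1, q.1, q.2))
        + (F₃ (q.1, q.2, q.2) - F₂ (q.1, q.2, q.2)) - F₃ (q.1, q.2, 0) := by
  have hface : ∀ {F : ℝ × ℝ × ℝ → ℝ} {σ : ℝ × ℝ → ℝ × ℝ × ℝ}, ContinuousOn F simplex →
      Continuous σ → MapsTo σ (triangle 0 1) simplex → ContinuousOn (F ∘ σ) (triangle 0 1) :=
    fun hF hσ h => hF.comp hσ.continuousOn h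
  have h₁ : ContinuousOn (fun q => F₁ (1, q.1, q.2) - F₁ (q.1, q.1, q.2)) (triangle 0 1) :=
    (hface hF₁ (by fun_prop) mapsTo_simplex_face_one).sub
      (hface hF₁ (by fun_prop) mapsTo_simplex_face_fst_eq_snd)
  have h₂ : ContinuousOn (fun q => F₂ (q.1, q.1, q.2) - F₂ (q.1, q.2, q.2)) (triangle 0 1) :=
    (hface hF₂ (by fun_prop) mapsTo_simplex_face_fst_eq_snd).sub
      (hface hF₂ (by fun_prop) mapsTo_simplex_face_snd_eq_thd)
  have h₃ : ContinuousOn (fun q => F₃ (q.1, q.2, q.2) - F₃ (q.1, q.2, 0)) (triangle 0 1) :=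
    (hface hF₃ (by fun_prop) mapsTo_simplex_face_snd_eq_thd).sub
      (hface hF₃ (by fun_prop) mapsTo_simplex_face_zero)
  rw [simplexIntegral_add (f := fun p => g₁ p + g₂ p) (hg₁.add hg₂) hg₃,
    simplexIntegral_add hg₁ hg₂, simplexIntegral_eq_of_hasDerivAt_fst hg₁ hd₁,
    simplexIntegral_eq_of_hasDerivAt_snd hg₂ hd₂, simplexIntegral_eq_of_hasDerivAt_thd hg₃ hd₃,
    ← triangleIntegral_add h₁ h₂, ← triangleIntegral_add ?_ h₃]
  · congr 1
    funext q
    ring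
  · exact h₁.add h₂

theorem hasDerivAt_sub_mul_inv {φ : ℝ → ℝ} {φ' t : ℝ} (c : ℝ) (hφ : HasDerivAt φ φ' t)
    (h : φ t ≠ 0) :
    HasDerivAt (fun s => (s - c) * (φ s)⁻¹) ((φ t)⁻¹ + (t - c) * (-φ' / φ t ^ 2)) t := by
  simpa using ((hasDerivAt_id' t).sub_const c).fun_mul (hφ.inv h)

theorem hasDerivAt_of_eq_quadratic {φ : ℝ → ℝ} {x d k : ℝ}
    (h : ∀ t, φ t = φ x + (t - x) * d + (t - x) ^ 2 * k) : HasDerivAt φ d x := by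
  have hs := (hasDerivAt_id' x).sub_const x
  have hq : HasDerivAt (fun t => φ x + (t - x) * d + (t - x) ^ 2 * k) d x := by
    simpa using ((hs.mul_const d).const_add (φ x)).fun_add ((hs.fun_pow 2).mul_const k)
  exact hq.congr_of_eventuallyEq (Filter.Eventually.of_forall h)

section Box

variable (H : Matrix (Fin 3) (Fin 3) ℝ) (X : Fin 3 → ℝ) (Δ : ℝ)

def boxGrad (p : ℝ × ℝ × ℝ) : Fin 3 → ℝ := (H + Hᵀ) *ᵥ (![p.1, p.2.1, p.2.2] - X)

@[fun_prop]
theorem Continuous.boxV {α : Type*} [TopologicalSpace α] {f g h : α → ℝ} (hf : Continuous f)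
    (hg : Continuous g) (hh : Continuous h) :
    Continuous fun a => _root_.boxV H X Δ (f a) (g a) (h a) := by
  unfold _root_.boxV; fun_prop

@[fun_prop]
theorem continuous_boxGrad (i : Fin 3) : Continuous fun p => boxGrad H X p i := by
  unfold boxGrad; fun_prop

theorem hasDerivAt_boxV_fst (p : ℝ × ℝ × ℝ) :
    HasDerivAt (fun t => boxV H X Δ t p.2.1 p.2.2) (boxGrad H X p 0) p.1 :=
  hasDerivAt_of_eq_quadratic (k := H 0 0) fun t => by
    simp only [boxV, boxGrad, dotProduct, mulVec, Fin.sum_univ_three, Pi.sub_apply,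
      Matrix.add_apply, transpose_apply, cons_val_zero, cons_val_one, cons_val]
    ring

theorem hasDerivAt_boxV_snd (p : ℝ × ℝ × ℝ) :
    HasDerivAt (fun t => boxV H X Δ p.1 t p.2.2) (boxGrad H X p 1) p.2.1 :=
  hasDerivAt_of_eq_quadratic (k := H 1 1) fun t => by
    simp only [boxV, boxGrad, dotProduct, mulVec, Fin.sum_univ_three, Pi.sub_apply,
      Matrix.add_apply, transpose_apply, cons_val_zero, cons_val_one, cons_val]
    ring

theorem hasDerivAt_boxV_thd (p : ℝ × ℝ × ℝ) :
    HasDerivAt (fun t => boxV H X Δ p.1 p.2.1 t) (boxGrad H X p 2) p.2.2 :=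
  hasDerivAt_of_eq_quadratic (k := H 2 2) fun t => by
    simp only [boxV, boxGrad, dotProduct, mulVec, Fin.sum_univ_three, Pi.sub_apply,
      Matrix.add_apply, transpose_apply, cons_val_zero, cons_val_one, cons_val]
    ring

theorem boxV_euler (p : ℝ × ℝ × ℝ) :
    (p.1 - X 0) * boxGrad H X p 0 + (p.2.1 - X 1) * boxGrad H X p 1
      + (p.2.2 - X 2) * boxGrad H X p 2 = 2 * (boxV H X Δ p.1 p.2.1 p.2.2 - Δ) := by
  simp only [boxV, boxGrad, dotProduct, mulVec, Fin.sum_univ_three, Pi.sub_apply,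
    Matrix.add_apply, transpose_apply, cons_val_zero, cons_val_one, cons_val]
  ring

theorem boxV_divergence (p : ℝ × ℝ × ℝ) (h : boxV H X Δ p.1 p.2.1 p.2.2 ≠ 0) :
    ((boxV H X Δ p.1 p.2.1 p.2.2)⁻¹
        + (p.1 - X 0) * (-boxGrad H X p 0 / boxV H X Δ p.1 p.2.1 p.2.2 ^ 2))
      + ((boxV H X Δ p.1 p.2.1 p.2.2)⁻¹
        + (p.2.1 - X 1) * (-boxGrad H X p 1 / boxV H X Δ p.1 p.2.1 p.2.2 ^ 2))
      + ((boxV H X Δ p.1 p.2.1 p.2.2)⁻¹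
        + (p.2.2 - X 2) * (-boxGrad H X p 2 / boxV H X Δ p.1 p.2.1 p.2.2 ^ 2)) =
    (boxV H X Δ p.1 p.2.1 p.2.2)⁻¹ + 2 * Δ * ((boxV H X Δ p.1 p.2.1 p.2.2) ^ 2)⁻¹ := by
  have e := boxV_euler H X Δ p
  field_simp
  linear_combination -e

theorem ContinuousOn.boxV_inv {α : Type*} [TopologicalSpace α] {s : Set α}
    {σ : α → ℝ × ℝ × ℝ} (hσ : Continuous σ) (hs : MapsTo σ s simplex)
    (hV : ∀ p ∈ simplex, boxV H X Δ p.1 p.2.1 p.2.2 ≠ 0) :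
    ContinuousOn (fun a => (boxV H X Δ (σ a).1 (σ a).2.1 (σ a).2.2)⁻¹) s :=
  ContinuousOn.inv₀ (by fun_prop) fun a ha => hV _ (hs ha)

theorem simplexIntegral_boxV_identity (hV : ∀ p ∈ simplex, boxV H X Δ p.1 p.2.1 p.2.2 ≠ 0) :
    simplexIntegral (fun p => (boxV H X Δ p.1 p.2.1 p.2.2)⁻¹)
        + 2 * Δ * simplexIntegral (fun p => ((boxV H X Δ p.1 p.2.1 p.2.2) ^ 2)⁻¹) =
      (1 - X 0) * triangleIntegral (fun q => (boxV H X Δ 1 q.1 q.2)⁻¹)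
        + (X 0 - X 1) * triangleIntegral (fun q => (boxV H X Δ q.1 q.1 q.2)⁻¹)
        + (X 1 - X 2) * triangleIntegral (fun q => (boxV H X Δ q.1 q.2 q.2)⁻¹)
        + (X 2 - 0) * triangleIntegral (fun q => (boxV H X Δ q.1 q.2 0)⁻¹) := by
  have hinv : ContinuousOn (fun p => (boxV H X Δ p.1 p.2.1 p.2.2)⁻¹) simplex :=
    ContinuousOn.boxV_inv H X Δ continuous_id (mapsTo_id _) hV
  have hsq : ContinuousOn (fun p => 2 * Δ * ((boxV H X Δ p.1 p.2.1 p.2.2) ^ 2)⁻¹) simplex :=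
    continuousOn_const.mul (ContinuousOn.inv₀ (by fun_prop) fun p hp => pow_ne_zero 2 (hV p hp))
  have hflux : ∀ {c : ℝ × ℝ × ℝ → ℝ}, Continuous c →
      ContinuousOn (fun p => c p * (boxV H X Δ p.1 p.2.1 p.2.2)⁻¹) simplex :=
    fun hc => hc.continuousOn.mul hinv
  have hdiv : ∀ i : Fin 3, ∀ {c : ℝ × ℝ × ℝ → ℝ}, Continuous c → ContinuousOn (fun p =>
      (boxV H X Δ p.1 p.2.1 p.2.2)⁻¹ + c p * (-boxGrad H X p i / boxV H X Δ p.1 p.2.1 p.2.2 ^ 2))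
      simplex := fun i c hc => by
    refine hinv.add (hc.continuousOn.mul (ContinuousOn.div (by fun_prop) (by fun_prop) ?_))
    exact fun p hp => pow_ne_zero 2 (hV p hp)
  have hface : ∀ {σ : ℝ × ℝ → ℝ × ℝ × ℝ} (c : ℝ), Continuous σ → MapsTo σ (triangle 0 1) simplex →
      ContinuousOn (fun q => c * (boxV H X Δ (σ q).1 (σ q).2.1 (σ q).2.2)⁻¹) (triangle 0 1) :=
    fun c hσ hs => continuousOn_const.mul (ContinuousOn.boxV_inv H X Δ hσ hs hV)
  have h₀ : ContinuousOn (fun q => (1 - X 0) * (boxV H X Δ 1 q.1 q.2)⁻¹) (triangle 0 1) :=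
    hface (σ := fun q => (1, q.1, q.2)) _ (by fun_prop) mapsTo_simplex_face_one
  have h₁ : ContinuousOn (fun q => (X 0 - X 1) * (boxV H X Δ q.1 q.1 q.2)⁻¹) (triangle 0 1) :=
    hface (σ := fun q => (q.1, q.1, q.2)) _ (by fun_prop) mapsTo_simplex_face_fst_eq_snd
  have h₂ : ContinuousOn (fun q => (X 1 - X 2) * (boxV H X Δ q.1 q.2 q.2)⁻¹) (triangle 0 1) :=
    hface (σ := fun q => (q.1, q.2, q.2)) _ (by fun_prop) mapsTo_simplex_face_snd_eq_thd
  have h₃ : ContinuousOn (fun q => (X 2 - 0) * (boxV H X Δ q.1 q.2 0)⁻¹) (triangle 0 1) :=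
    hface (σ := fun q => (q.1, q.2, 0)) _ (by fun_prop) mapsTo_simplex_face_zero
  rw [← simplexIntegral_const_mul, ← simplexIntegral_add hinv hsq,
    ← simplexIntegral_congr fun p hp => boxV_divergence H X Δ p (hV p hp)]
  rw [simplexIntegral_divergence (F₁ := fun p => (p.1 - X 0) * (boxV H X Δ p.1 p.2.1 p.2.2)⁻¹)
      (F₂ := fun p => (p.2.1 - X 1) * (boxV H X Δ p.1 p.2.1 p.2.2)⁻¹)
      (F₃ := fun p => (p.2.2 - X 2) * (boxV H X Δ p.1 p.2.1 p.2.2)⁻¹)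
      (hflux (by fun_prop)) (hflux (by fun_prop)) (hflux (by fun_prop))
      (hdiv 0 (c := fun p => p.1 - X 0) (by fun_prop))
      (hdiv 1 (c := fun p => p.2.1 - X 1) (by fun_prop))
      (hdiv 2 (c := fun p => p.2.2 - X 2) (by fun_prop))
      (fun p hp => hasDerivAt_sub_mul_inv _ (hasDerivAt_boxV_fst H X Δ p) (hV p hp))
      (fun p hp => hasDerivAt_sub_mul_inv _ (hasDerivAt_boxV_snd H X Δ p) (hV p hp))
      (fun p hp => hasDerivAt_sub_mul_inv _ (hasDerivAt_boxV_thd H X Δ p) (hV p hp)),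
    ← triangleIntegral_const_mul, ← triangleIntegral_const_mul, ← triangleIntegral_const_mul,
    ← triangleIntegral_const_mul, ← triangleIntegral_add h₀ h₁, ← triangleIntegral_add ?_ h₂,
    ← triangleIntegral_add ?_ h₃]
  · congr 1
    funext q
    ring
  · exact (h₀.add h₁).add h₂
  · exact h₀.add h₁

end Box

theorem stmt_9_general (H : Matrix (Fin 3) (Fin 3) ℝ)
    (X : Fin 3 → ℝ) (Δ : ℝ) (hΔ : Δ ≠ 0)
    (hV : ∀ x₁ x₂ x₃ : ℝ, 0 ≤ x₃ → x₃ ≤ x₂ → x₂ ≤ x₁ → x₁ ≤ 1 →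
      boxV H X Δ x₁ x₂ x₃ ≠ 0) :
    (∫ x₁ in (0:ℝ)..1, ∫ x₂ in (0:ℝ)..x₁, ∫ x₃ in (0:ℝ)..x₂,
        ((boxV H X Δ x₁ x₂ x₃) ^ 2)⁻¹) =
      -(1 / (2 * Δ)) *
        ((∫ x₁ in (0:ℝ)..1, ∫ x₂ in (0:ℝ)..x₁, ∫ x₃ in (0:ℝ)..x₂,
            (boxV H X Δ x₁ x₂ x₃)⁻¹) -
          ((1 - X 0) *
              (∫ y₁ in (0:ℝ)..1, ∫ y₂ in (0:ℝ)..y₁, (boxV H X Δ 1 y₁ y₂)⁻¹) +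
            (X 0 - X 1) *
              (∫ y₁ in (0:ℝ)..1, ∫ y₂ in (0:ℝ)..y₁, (boxV H X Δ y₁ y₁ y₂)⁻¹) +
            (X 1 - X 2) *
              (∫ y₁ in (0:ℝ)..1, ∫ y₂ in (0:ℝ)..y₁, (boxV H X Δ y₁ y₂ y₂)⁻¹) +
            (X 2 - 0) *
              (∫ y₁ in (0:ℝ)..1, ∫ y₂ in (0:ℝ)..y₁, (boxV H X Δ y₁ y₂ 0)⁻¹))) := by
  have key := simplexIntegral_boxV_identity H X Δ fun p ⟨h₁, h₂, h₃, h₄⟩ => hV _ _ _ h₁ h₂ h₃ h₄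
  simp only [simplexIntegral, triangleIntegral] at key
  rw [← key]
  field_simp
  ring

/-- Dimension shift for the box: `D₀(4) = -(1/(2Δ₄)) (D₀(6) - T)`, where
`D₀(d) = ∫_simplex V^{d/2-4}` and `T = Σᵢ (Xᵢ - Xᵢ₊₁) ∫ V⁻¹(contraction i,i+1)`
with `X₀ = 1`, `X₄ = 0`. -/
theorem stmt_9 (H : Matrix (Fin 3) (Fin 3) ℝ) (hH : H.IsSymm)
    (X : Fin 3 → ℝ) (Δ : ℝ) (hΔ : Δ ≠ 0)
    (hV : ∀ x₁ x₂ x₃ : ℝ, 0 ≤ x₃ → x₃ ≤ x₂ → x₂ ≤ x₁ → x₁ ≤ 1 →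
      boxV H X Δ x₁ x₂ x₃ ≠ 0) :
    (∫ x₁ in (0:ℝ)..1, ∫ x₂ in (0:ℝ)..x₁, ∫ x₃ in (0:ℝ)..x₂,
        ((boxV H X Δ x₁ x₂ x₃) ^ 2)⁻¹) =
      -(1 / (2 * Δ)) *
        ((∫ x₁ in (0:ℝ)..1, ∫ x₂ in (0:ℝ)..x₁, ∫ x₃ in (0:ℝ)..x₂,
            (boxV H X Δ x₁ x₂ x₃)⁻¹) -
          ((1 - X 0) *
              (∫ y₁ in (0:ℝ)..1, ∫ y₂ in (0:ℝ)..y₁, (boxV H X Δ 1 y₁ y₂)⁻¹) +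
            (X 0 - X 1) *
              (∫ y₁ in (0:ℝ)..1, ∫ y₂ in (0:ℝ)..y₁, (boxV H X Δ y₁ y₁ y₂)⁻¹) +
            (X 1 - X 2) *
              (∫ y₁ in (0:ℝ)..1, ∫ y₂ in (0:ℝ)..y₁, (boxV H X Δ y₁ y₂ y₂)⁻¹) +
            (X 2 - 0) *
              (∫ y₁ in (0:ℝ)..1, ∫ y₂ in (0:ℝ)..y₁, (boxV H X Δ y₁ y₂ 0)⁻¹))) :=
  stmt_9_general H X Δ hΔ hV
end
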